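/- Let Σ be a real diagonal e×e matrix with diagonal entries in (0, 1/σ] for some σ > 0, let A be a real e×n matrix (e ≥ 1, n ≥ 1), and let B = [Σ A −Σ] be the e×(n+e) block matrix. Then the largest eigenvalue of BᵀB is at most (1/σ²)·(λ_max(A Aᵀ) + 1). -/

import Mathlib

/-!
In the ℓ² operator norm, the largest eigenvalue of `Mᴴ M` and of `M Mᴴ` is `‖M‖²` (the spectral
theorem and the C⋆-identity). Factor `B = S · [A  −1]`; then `‖B‖ ≤ ‖S‖ ‖[A  −1]‖`, where
`‖S‖ = maxᵢ |Sᵢᵢ| ≤ 1/σ`, and `‖[A  −1]‖² = ‖A Aᴴ + 1‖ ≤ ‖A‖² + 1`.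
-/

open Matrix

open scoped ComplexOrder Matrix.Norms.L2Operator

namespace Matrix

variable {𝕜 m n p : Type*} [RCLike 𝕜] [Fintype m] [Fintype n] [Fintype p] [DecidableEq n]

theorem IsHermitian.l2_opNorm_eq_norm_eigenvalues {A : Matrix n n 𝕜} (hA : A.IsHermitian) :
    ‖A‖ = ‖hA.eigenvalues‖ := by
  conv_lhs => rw [hA.spectral_theorem]
  rw [Unitary.conjStarAlgAut_apply,
    CStarRing.norm_mul_mem_unitary _ (Unitary.star_mem hA.eigenvectorUnitary.2),
    CStarRing.norm_coe_unitary_mul, l2_opNorm_diagonal]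
  simp [Pi.norm_def]

theorem PosSemidef.l2_opNorm_eq_iSup_eigenvalues {A : Matrix n n 𝕜} (hA : A.PosSemidef) :
    ‖A‖ = ⨆ i, hA.1.eigenvalues i := by
  rw [hA.1.l2_opNorm_eq_norm_eigenvalues]
  refine le_antisymm ?_ (Real.iSup_le (fun i => ?_) (norm_nonneg _))
  · rw [pi_norm_le_iff_of_nonneg (Real.iSup_nonneg hA.eigenvalues_nonneg)]
    intro i
    rw [Real.norm_of_nonneg (hA.eigenvalues_nonneg i)]
    exact le_ciSup (Set.finite_range _).bddAbove i
  · exact (le_abs_self _).trans (norm_le_pi_norm hA.1.eigenvalues i)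

theorem iSup_eigenvalues_conjTranspose_mul_self (A : Matrix m n 𝕜)
    (hA : (Aᴴ * A).IsHermitian) : ⨆ i, hA.eigenvalues i = ‖A‖ ^ 2 := by
  rw [← (posSemidef_conjTranspose_mul_self A).l2_opNorm_eq_iSup_eigenvalues,
    l2_opNorm_conjTranspose_mul_self, sq]

theorem IsDiag.l2_opNorm_le {D : Matrix n n 𝕜} (hD : D.IsDiag) {r : ℝ} (hr : 0 ≤ r)
    (h : ∀ i, ‖D i i‖ ≤ r) : ‖D‖ ≤ r := by
  rw [← hD.diagonal_diag, l2_opNorm_diagonal, pi_norm_le_iff_of_nonneg hr]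
  exact h

variable [DecidableEq m]

theorem l2_opNorm_self_mul_conjTranspose (A : Matrix m n 𝕜) : ‖A * Aᴴ‖ = ‖A‖ * ‖A‖ := by
  simpa [l2_opNorm_conjTranspose] using l2_opNorm_conjTranspose_mul_self Aᴴ

theorem iSup_eigenvalues_self_mul_conjTranspose (A : Matrix m n 𝕜)
    (hA : (A * Aᴴ).IsHermitian) : ⨆ i, hA.eigenvalues i = ‖A‖ ^ 2 := by
  rw [← (posSemidef_self_mul_conjTranspose A).l2_opNorm_eq_iSup_eigenvalues,
    l2_opNorm_self_mul_conjTranspose, sq]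

theorem l2_opNorm_fromCols_sq_le [DecidableEq p] (A : Matrix m n 𝕜) (B : Matrix m p 𝕜) :
    ‖fromCols A B‖ ^ 2 ≤ ‖A‖ ^ 2 + ‖B‖ ^ 2 := by
  simp only [sq, ← l2_opNorm_self_mul_conjTranspose,
    conjTranspose_fromCols_eq_fromRows_conjTranspose, fromCols_mul_fromRows]
  exact norm_add_le _ _

end Matrix

theorem gram_block_maxEig_bound_general (e n : ℕ) (he : 1 ≤ e)
    (σ : ℝ) (hσ : 0 < σ)
    (S : Matrix (Fin e) (Fin e) ℝ) (hS : S.IsDiag)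
    (hdiag : ∀ i, 0 < S i i ∧ S i i ≤ 1 / σ)
    (A : Matrix (Fin e) (Fin n) ℝ)
    (B : Matrix (Fin e) (Fin n ⊕ Fin e) ℝ)
    (hB : B = Matrix.fromCols (S * A) (-S))
    (h₁ : (Bᵀ * B).IsHermitian) (h₂ : (A * Aᵀ).IsHermitian) :
    (⨆ i, h₁.eigenvalues i) ≤ (1 / σ ^ 2) * ((⨆ i, h₂.eigenvalues i) + 1) := by
  have : Nonempty (Fin e) := Fin.pos_iff_nonempty.mp he
  have hB_factor : B = S * fromCols A (-1) := by rw [hB, mul_fromCols, mul_neg, mul_one]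
  have hS_norm : ‖S‖ ≤ 1 / σ := hS.l2_opNorm_le (by positivity) fun i =>
    (Real.norm_of_nonneg (hdiag i).1.le).trans_le (hdiag i).2
  -- over `ℝ`, `Aᴴ` unfolds to `Aᵀ`
  have hAAt : ⨆ i, h₂.eigenvalues i = ‖A‖ ^ 2 := iSup_eigenvalues_self_mul_conjTranspose A h₂
  calc ⨆ i, h₁.eigenvalues i = ‖B‖ ^ 2 := iSup_eigenvalues_conjTranspose_mul_self B h₁
    _ ≤ (‖S‖ * ‖fromCols A (-1)‖) ^ 2 := by
      gcongr
      exact hB_factor ▸ l2_opNorm_mul _ _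
    _ = ‖S‖ ^ 2 * ‖fromCols A (-1)‖ ^ 2 := mul_pow _ _ _
    _ ≤ (1 / σ) ^ 2 * (‖A‖ ^ 2 + ‖(-1 : Matrix (Fin e) (Fin e) ℝ)‖ ^ 2) := by
      gcongr
      exact l2_opNorm_fromCols_sq_le _ _
    _ = (1 / σ ^ 2) * ((⨆ i, h₂.eigenvalues i) + 1) := by
      rw [norm_neg, norm_one, hAAt]
      ring

/-- Combining steps 4–6 of Appendix A: if `S` is diagonal with diagonal entries in
`(0, 1/σ]` and `B = [S·A  −S]`, then the largest eigenvalue of the Gram block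
`BᵀB` is at most `(1/σ²)(λ_max(A·Aᵀ) + 1)`. -/
theorem gram_block_maxEig_bound (e n : ℕ) (he : 1 ≤ e) (hn : 1 ≤ n)
    (σ : ℝ) (hσ : 0 < σ)
    (S : Matrix (Fin e) (Fin e) ℝ) (hS : S.IsDiag)
    (hdiag : ∀ i, 0 < S i i ∧ S i i ≤ 1 / σ)
    (A : Matrix (Fin e) (Fin n) ℝ)
    (B : Matrix (Fin e) (Fin n ⊕ Fin e) ℝ)
    (hB : B = Matrix.fromCols (S * A) (-S))
    (h₁ : (Bᵀ * B).IsHermitian) (h₂ : (A * Aᵀ).IsHermitian) :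
    (⨆ i, h₁.eigenvalues i) ≤ (1 / σ ^ 2) * ((⨆ i, h₂.eigenvalues i) + 1) :=
  gram_block_maxEig_bound_general e n he σ hσ S hS hdiag A B hB h₁ h₂
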